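/- The set function f(Y) = log det(L_Y) (with f(∅) = 0) on subsets of {1,…,M} is submodular when L is positive definite: for all Y ⊆ Y' and i ∉ Y', f(Y ∪ {i}) − f(Y) ≥ f(Y' ∪ {i}) − f(Y'). -/

import Mathlib

open Matrix

/-- Principal submatrix of `L` indexed by the finite set `Y`. -/
def pSub {M : ℕ} (L : Matrix (Fin M) (Fin M) ℝ) (Y : Finset (Fin M)) :
    Matrix Y Y ℝ := Matrix.of fun a b => L a.1 b.1

/-!
Adding `i` to `Y` multiplies `det L_Y` by the Schur complement
`s_Y = L i i - L_{i,Y} L_Y⁻¹ L_{Y,i}` (block determinant formula), so the increments of `log det`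
are `log s_Y`. For positive definite `L`, `s_Y` is the minimum of `w ↦ (e_i + w)ᵀ L (e_i + w)`
over the vectors `w` supported on `Y`; enlarging `Y` only adds competitors, hence `s_Y` is
antitone in `Y`.
-/

open Function

namespace Matrix

variable {m n R : Type*} [Fintype m] [Fintype n]

lemma comp_dotProduct_comp_of_support_subset [NonUnitalNonAssocSemiring R] {e : m → n}
    (he : Injective e) (v : n → R) {w : n → R} (hw : support w ⊆ Set.range e) :
    (v ∘ e) ⬝ᵥ (w ∘ e) = v ⬝ᵥ w :=
  Fintype.sum_of_injective e he _ _
    (fun j hj => by rw [notMem_support.mp fun h => hj (hw h), mul_zero]) fun _ => rfl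

lemma submatrix_mulVec_comp_of_support_subset [NonUnitalNonAssocSemiring R] (A : Matrix n n R)
    {e : m → n} (he : Injective e) {w : n → R} (hw : support w ⊆ Set.range e) :
    A.submatrix e e *ᵥ (w ∘ e) = (A *ᵥ w) ∘ e :=
  funext fun a => comp_dotProduct_comp_of_support_subset he (A (e a)) hw

lemma comp_dotProduct_submatrix_mulVec_comp [NonUnitalCommSemiring R] (A : Matrix n n R)
    {e : m → n} (he : Injective e) {w : n → R} (hw : support w ⊆ Set.range e) :
    (w ∘ e) ⬝ᵥ A.submatrix e e *ᵥ (w ∘ e) = w ⬝ᵥ A *ᵥ w := by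
  rw [submatrix_mulVec_comp_of_support_subset A he hw, dotProduct_comm,
    comp_dotProduct_comp_of_support_subset he _ hw, dotProduct_comm]

lemma PosDef.isLeast_quadratic [DecidableEq m] {A : Matrix m m ℝ} (hA : A.PosDef) (u : m → ℝ) :
    IsLeast (Set.range fun x => x ⬝ᵥ A *ᵥ x + 2 * (u ⬝ᵥ x)) (-(u ⬝ᵥ A⁻¹ *ᵥ u)) := by
  have hAu : A *ᵥ (A⁻¹ *ᵥ u) = u := by
    rw [mulVec_mulVec, mul_nonsing_inv A ((isUnit_iff_isUnit_det A).mp hA.isUnit), one_mulVec]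
  have hsymm : Aᵀ = A := hA.isHermitian
  have square (x : m → ℝ) : (x + A⁻¹ *ᵥ u) ⬝ᵥ A *ᵥ (x + A⁻¹ *ᵥ u)
      = x ⬝ᵥ A *ᵥ x + 2 * (u ⬝ᵥ x) + u ⬝ᵥ A⁻¹ *ᵥ u := by
    rw [mulVec_add, add_dotProduct, dotProduct_add, dotProduct_add, hAu,
      dotProduct_mulVec (A⁻¹ *ᵥ u), ← mulVec_transpose, hsymm, hAu, dotProduct_comm x u,
      dotProduct_comm (A⁻¹ *ᵥ u) u]
    ring
  refine ⟨⟨-(A⁻¹ *ᵥ u), ?_⟩, ?_⟩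
  · have := square (-(A⁻¹ *ᵥ u))
    rw [neg_add_cancel, zero_dotProduct] at this
    linarith
  · rintro _ ⟨x, rfl⟩
    have := hA.posSemidef.dotProduct_mulVec_nonneg (x + A⁻¹ *ᵥ u)
    rw [star_trivial, square] at this
    linarith

end Matrix

noncomputable def schurCompl {M : ℕ} (L : Matrix (Fin M) (Fin M) ℝ) (i : Fin M)
    (Z : Finset (Fin M)) : ℝ :=
  L i i - (fun a : Z => L i a) ⬝ᵥ (pSub L Z)⁻¹ *ᵥ (fun a : Z => L a i)

section Schur

variable {M : ℕ} {L : Matrix (Fin M) (Fin M) ℝ} {i : Fin M}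

lemma pSub_eq_submatrix (Z : Finset (Fin M)) :
    pSub L Z = L.submatrix (↑) (↑) := rfl

lemma Matrix.PosDef.pSub (hL : L.PosDef) (Z : Finset (Fin M)) : (pSub L Z).PosDef :=
  hL.submatrix Subtype.val_injective

lemma det_pSub_insert {Z : Finset (Fin M)} (hi : i ∉ Z) (hZ : IsUnit (pSub L Z).det) :
    (pSub L (insert i Z)).det = (pSub L Z).det * schurCompl L i Z := by
  let e := (Finset.subtypeInsertEquivOption hi).trans (Equiv.optionEquivSumPUnit.{0} Z)
  have hblocks : (pSub L (insert i Z)).submatrix e.symm e.symm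
      = fromBlocks (pSub L Z) (of fun a (_ : PUnit) => L a i) (of fun _ b => L i b)
          (of fun _ _ => L i i) := by
    ext (a | _) (b | _) <;> simp [e, pSub, Finset.subtypeInsertEquivOption]
  have := (pSub L Z).invertibleOfIsUnitDet hZ
  rw [← det_submatrix_equiv_self e.symm, hblocks, det_fromBlocks₁₁, invOf_eq_nonsing_inv,
    det_unique (n := PUnit), Matrix.mul_assoc]
  rfl

lemma schurCompl_eq_of_posDef (hL : L.PosDef) (Z : Finset (Fin M)) :
    schurCompl L i Z
      = L i i - (fun a : Z => L i a) ⬝ᵥ (pSub L Z)⁻¹ *ᵥ (fun a : Z => L i a) := by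
  have hsymm (a : Z) : L a i = L i a := by simpa using hL.isHermitian.apply i a
  simp only [schurCompl, hsymm]

lemma schurCompl_antitone (hL : L.PosDef) {Y Y' : Finset (Fin M)} (hY : Y ⊆ Y') :
    schurCompl L i Y' ≤ schurCompl L i Y := by
  have restrict {Z : Finset (Fin M)} {w : Fin M → ℝ} (hw : support w ⊆ Z) :
      (w ∘ (↑)) ⬝ᵥ pSub L Z *ᵥ (w ∘ (↑)) + 2 * ((fun a : Z => L i a) ⬝ᵥ (w ∘ (↑)))
        = w ⬝ᵥ L *ᵥ w + 2 * (L i ⬝ᵥ w) := by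
    replace hw : support w ⊆ Set.range ((↑) : Z → Fin M) := by simpa using hw
    rw [pSub_eq_submatrix, comp_dotProduct_submatrix_mulVec_comp L Subtype.val_injective hw]
    congr 2
    exact comp_dotProduct_comp_of_support_subset Subtype.val_injective (L i) hw
  -- the minimizer for `Y`, extended by zero, competes for `Y'`
  obtain ⟨⟨x, hx⟩, -⟩ := (hL.pSub Y).isLeast_quadratic (fun a : Y => L i a)
  set w := extend ((↑) : Y → Fin M) x 0
  have hwY : support w ⊆ Y :=
    support_extend_zero_subset.trans <| (Set.image_subset_range _ _).trans Subtype.range_coe.subset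
  have hxw : w ∘ (↑) = x := funext (Subtype.val_injective.extend_apply x 0)
  have hle := (hL.pSub Y').isLeast_quadratic (fun a : Y' => L i a) |>.2 ⟨w ∘ (↑), rfl⟩
  beta_reduce at hx hle
  rw [← hxw, restrict hwY] at hx
  rw [restrict (hwY.trans (Finset.coe_subset.mpr hY))] at hle
  rw [schurCompl_eq_of_posDef hL, schurCompl_eq_of_posDef hL]
  linarith

lemma schurCompl_pos (hL : L.PosDef) {Z : Finset (Fin M)} (hi : i ∉ Z) :
    0 < schurCompl L i Z := by
  have h := (hL.pSub (insert i Z)).det_pos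
  rwa [det_pSub_insert hi (hL.pSub Z).det_pos.ne'.isUnit,
    mul_pos_iff_of_pos_left (hL.pSub Z).det_pos] at h

lemma log_det_pSub_insert_sub (hL : L.PosDef) {Z : Finset (Fin M)} (hi : i ∉ Z) :
    Real.log (pSub L (insert i Z)).det - Real.log (pSub L Z).det
      = Real.log (schurCompl L i Z) := by
  rw [det_pSub_insert hi (hL.pSub Z).det_pos.ne'.isUnit,
    Real.log_mul (hL.pSub Z).det_pos.ne' (schurCompl_pos hL hi).ne', add_sub_cancel_left]

end Schur

theorem logdet_submodular
    {M : ℕ} (L : Matrix (Fin M) (Fin M) ℝ) (hL : L.PosDef) :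
    ∀ Y Y' : Finset (Fin M), Y ⊆ Y' → ∀ i : Fin M, i ∉ Y' →
      Real.log (pSub L (insert i Y')).det - Real.log (pSub L Y').det
        ≤ Real.log (pSub L (insert i Y)).det - Real.log (pSub L Y).det := by
  intro Y Y' hY i hi'
  have hi : i ∉ Y := fun h => hi' (hY h)
  rw [log_det_pSub_insert_sub hL hi', log_det_pSub_insert_sub hL hi]
  exact Real.log_le_log (schurCompl_pos hL hi') (schurCompl_antitone hL hY)
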